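/- Let r ≥ 4 be an EVEN integer. Then for any n ≥ r-1 and any A > 0, there exists f ∈ C^r ∩ Δ^(0)({0}) such that, for every polynomial P_n of degree ≤ n with P_n ∈ Δ^(0)({0}) and satisfying P_n^(i)(0) = f^(i)(0) for all 0 ≤ i ≤ r-1, one has ‖f - P_n‖ > A ‖f^(r)‖. Hence copositive approximation with Hermite interpolation of order r-1 at the sign-change point 0 is impossible for even r ≥ 4. -/

import Mathlib

/-!
Write `r = m + 3` with `m` odd. Near `0` the counterexample `f(x) = δ^(m+2) F(x/δ)`, where `F(t)`
is `t^m (1 - t²)` smoothly cut off outside `[-1/2, 1/2]`, coincides with `T(x) = x^m (δ² - x²)`;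
`f` is copositive and `‖f^(r)‖ = O(1/δ)`. An interpolating `P` has the form `T + x^r q`, and its
copositivity at `±2δ`, where `T` has the wrong sign, forces `q(2δ) - q(-2δ) ≥ 3/(4δ)`. Since the
coefficients of a polynomial of degree `≤ d` are bounded by a multiple of its sup norm,
`q(2δ) - q(-2δ) = O(δ ‖P - T‖)`, so `‖f - P‖ ≥ ‖P - T‖ - 3` grows like `δ⁻²`, which beats
`A ‖f^(r)‖ = O(δ⁻¹)` for small `δ`.
-/

/-- The sup norm of `g` on `[a,b]`. -/
noncomputable def supNorm (g : ℝ → ℝ) (a b : ℝ) : ℝ :=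
  sSup ((fun x => |g x|) '' Set.Icc a b)

/-- `g ∈ Δ^(0)({0})`: `g ≤ 0` on `[-1,0]` and `g ≥ 0` on `[0,1]`. -/
def Delta0Zero (g : ℝ → ℝ) : Prop :=
  (∀ x ∈ Set.Icc (-1 : ℝ) 0, g x ≤ 0) ∧ (∀ x ∈ Set.Icc (0 : ℝ) 1, 0 ≤ g x)

open Set Polynomial Filter Topology
open scoped ContDiff

section SupNorm

variable {g : ℝ → ℝ} {a b : ℝ}

lemma abs_le_supNorm (hg : ContinuousOn g (Icc a b)) {x : ℝ} (hx : x ∈ Icc a b) :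
    |g x| ≤ supNorm g a b :=
  le_csSup (isCompact_Icc.image_of_continuousOn hg.abs).bddAbove ⟨x, hx, rfl⟩

lemma supNorm_le (hab : a ≤ b) {C : ℝ} (h : ∀ x ∈ Icc a b, |g x| ≤ C) : supNorm g a b ≤ C :=
  Real.sSup_le (by rintro _ ⟨x, hx, rfl⟩; exact h x hx) ((abs_nonneg _).trans (h a ⟨le_rfl, hab⟩))

lemma supNorm_nonneg : 0 ≤ supNorm g a b :=
  Real.sSup_nonneg (by rintro _ ⟨x, -, rfl⟩; exact abs_nonneg _)

end SupNorm

section Polynomial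

lemma iteratedDeriv_eval (p : ℝ[X]) (i : ℕ) :
    iteratedDeriv i (fun x => p.eval x) = fun x => (derivative^[i] p).eval x := by
  induction i with
  | zero => simp
  | succ i ih =>
    ext x
    rw [iteratedDeriv_succ, ih, Function.iterate_succ_apply', Polynomial.deriv]

lemma X_pow_dvd_sub_of_iterate_derivative_eval_zero {K : Type*} [Field K] [CharZero K]
    {P T : K[X]} {r : ℕ} (h : ∀ i < r, (derivative^[i] P).eval 0 = (derivative^[i] T).eval 0) :
    X ^ r ∣ P - T := by
  refine X_pow_dvd_iff.2 fun i hi => ?_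
  have h0 : (derivative^[i] (P - T)).coeff 0 = 0 := by
    rw [iterate_derivative_sub, coeff_sub, coeff_zero_eq_eval_zero, coeff_zero_eq_eval_zero,
      h i hi, sub_self]
  rw [coeff_iterate_derivative, zero_add, Nat.descFactorial_self, nsmul_eq_mul] at h0
  exact (mul_eq_zero.1 h0).resolve_left (by exact_mod_cast i.factorial_ne_zero)

lemma abs_pow_sub_neg_pow_le {s : ℝ} (hs0 : 0 ≤ s) (hs1 : s ≤ 1) (i : ℕ) :
    |s ^ i - (-s) ^ i| ≤ 2 * s := by
  rcases i.even_or_odd with hi | hi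
  · rw [hi.neg_pow, sub_self, abs_zero]
    positivity
  · have : s ^ i ≤ s := pow_le_of_le_one hs0 hs1 hi.pos.ne'
    rw [hi.neg_pow, sub_neg_eq_add, abs_of_nonneg (by positivity)]
    linarith

lemma eval_sub_eval_neg_le {q : ℝ[X]} {d : ℕ} (hq : q.natDegree ≤ d) {M : ℝ}
    (hM : ∀ i, |q.coeff i| ≤ M) {s : ℝ} (hs0 : 0 ≤ s) (hs1 : s ≤ 1) :
    q.eval s - q.eval (-s) ≤ (d + 1) * M * (2 * s) := by
  have hlt : q.natDegree < d + 1 := Nat.lt_succ_of_le hq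
  rw [eval_eq_sum_range' hlt, eval_eq_sum_range' hlt, ← Finset.sum_sub_distrib]
  calc ∑ i ∈ Finset.range (d + 1), (q.coeff i * s ^ i - q.coeff i * (-s) ^ i)
      ≤ ∑ _i ∈ Finset.range (d + 1), M * (2 * s) := by
        refine Finset.sum_le_sum fun i _ => ?_
        calc q.coeff i * s ^ i - q.coeff i * (-s) ^ i
            ≤ |q.coeff i| * |s ^ i - (-s) ^ i| := by rw [← mul_sub, ← abs_mul]; exact le_abs_self _
          _ ≤ M * (2 * s) := mul_le_mul (hM i) (abs_pow_sub_neg_pow_le hs0 hs1 i)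
              (abs_nonneg _) ((abs_nonneg _).trans (hM i))
    _ = (d + 1) * M * (2 * s) := by
        rw [Finset.sum_const, Finset.card_range, nsmul_eq_mul]
        push_cast
        ring

lemma coeff_eq_sum_eval_mul_coeff_lagrangeBasis {F ι : Type*} [Field F] [DecidableEq ι]
    {s : Finset ι} {v : ι → F} (hinj : InjOn v s) {p : F[X]} (hdeg : p.degree < s.card) (k : ℕ) :
    p.coeff k = ∑ j ∈ s, p.eval (v j) * (Lagrange.basis s v j).coeff k := by
  conv_lhs => rw [Lagrange.eq_interpolate hinj hdeg, Lagrange.interpolate_apply, finsetSum_coeff]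
  simp only [coeff_C_mul]

end Polynomial

lemma exists_abs_coeff_le_mul_supNorm {a b : ℝ} (hab : a < b) (d : ℕ) :
    ∃ C : ℝ, 0 < C ∧ ∀ p : ℝ[X], p.natDegree ≤ d →
      ∀ k, |p.coeff k| ≤ C * supNorm (fun x => p.eval x) a b := by
  classical
  set s := Finset.range (d + 1)
  set v : ℕ → ℝ := fun j => a + (b - a) * (j / (d + 1))
  have hv : ∀ j ∈ s, v j ∈ Icc a b := fun j hj => by
    have h0 : (0 : ℝ) ≤ j / (d + 1) := by positivity
    have h1 : (j : ℝ) / (d + 1) ≤ 1 := by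
      rw [div_le_one (by positivity)]
      exact_mod_cast (Finset.mem_range.1 hj).le
    constructor <;> nlinarith
  have hinj : InjOn v s := fun i _ j _ hij => by
    have := div_left_inj' (by positivity : (d : ℝ) + 1 ≠ 0) |>.1 <|
      mul_left_cancel₀ (sub_ne_zero.2 hab.ne') (add_left_cancel hij)
    exact_mod_cast this
  set B := ∑ j ∈ s, ∑ m ∈ s, |(Lagrange.basis s v j).coeff m|
  refine ⟨B + 1, by positivity, fun p hp k => ?_⟩
  have hN : 0 ≤ supNorm (fun x => p.eval x) a b := supNorm_nonneg
  rcases lt_or_ge d k with hk | hk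
  · rw [coeff_eq_zero_of_natDegree_lt (hp.trans_lt hk), abs_zero]
    positivity
  have hdeg : p.degree < s.card := by
    rw [Finset.card_range]
    exact degree_le_natDegree.trans_lt (by exact_mod_cast Nat.lt_succ_of_le hp)
  calc |p.coeff k| ≤ ∑ j ∈ s, |p.eval (v j)| * |(Lagrange.basis s v j).coeff k| := by
        rw [coeff_eq_sum_eval_mul_coeff_lagrangeBasis hinj hdeg]
        exact (Finset.abs_sum_le_sum_abs _ _).trans_eq (by simp only [abs_mul])
    _ ≤ ∑ j ∈ s, supNorm (fun x => p.eval x) a b *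
          ∑ m ∈ s, |(Lagrange.basis s v j).coeff m| := by
        refine Finset.sum_le_sum fun j hj => mul_le_mul
          (abs_le_supNorm p.continuous.continuousOn (hv j hj)) ?_ (abs_nonneg _) hN
        exact Finset.single_le_sum (f := fun m => |(Lagrange.basis s v j).coeff m|)
          (fun _ _ => abs_nonneg _) (Finset.mem_range.2 (Nat.lt_succ_of_le hk))
    _ = B * supNorm (fun x => p.eval x) a b := by rw [← Finset.mul_sum, mul_comm]
    _ ≤ (B + 1) * supNorm (fun x => p.eval x) a b := by nlinarith

section Profile

noncomputable def quarterBump : ContDiffBump (0 : ℝ) := ⟨1 / 4, 1 / 2, by norm_num, by norm_num⟩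

noncomputable def bumpProfile (m : ℕ) (t : ℝ) : ℝ := t ^ m * ((1 - t ^ 2) * quarterBump t)

variable (m : ℕ)

lemma contDiff_bumpProfile : ContDiff ℝ ∞ (bumpProfile m) :=
  (contDiff_id.pow m).mul ((contDiff_const.sub (contDiff_id.pow 2)).mul quarterBump.contDiff)

lemma hasCompactSupport_bumpProfile : HasCompactSupport (bumpProfile m) :=
  HasCompactSupport.mul_left (f := fun t : ℝ => t ^ m)
    (HasCompactSupport.mul_left (f := fun t : ℝ => 1 - t ^ 2) quarterBump.hasCompactSupport)

lemma bumpProfile_eq_zero {t : ℝ} (ht : 1 / 2 ≤ |t|) : bumpProfile m t = 0 := by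
  have : quarterBump t = 0 :=
    quarterBump.zero_of_le_dist (by rwa [Real.dist_eq, sub_zero])
  simp [bumpProfile, this]

lemma bumpProfile_of_abs_le {t : ℝ} (ht : |t| ≤ 1 / 4) : bumpProfile m t = t ^ m * (1 - t ^ 2) := by
  have : quarterBump t = 1 :=
    quarterBump.one_of_mem_closedBall (by rwa [Metric.mem_closedBall, Real.dist_eq, sub_zero])
  simp [bumpProfile, this]

lemma abs_bumpProfile_le_one (t : ℝ) : |bumpProfile m t| ≤ 1 := by
  rcases le_or_gt (1 / 2) |t| with ht | ht
  · simp [bumpProfile_eq_zero m ht]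
  have ht1 : |t| ≤ 1 := by linarith
  have h1 : |t ^ m| ≤ 1 := by rw [abs_pow]; exact pow_le_one₀ (abs_nonneg t) ht1
  have h2 : |1 - t ^ 2| ≤ 1 := by
    rw [abs_le] at ht1 ⊢
    constructor <;> nlinarith
  have h3 : |(quarterBump t : ℝ)| ≤ 1 := by
    rw [abs_of_nonneg quarterBump.nonneg]; exact quarterBump.le_one
  rw [bumpProfile, abs_mul, abs_mul]
  exact mul_le_one₀ h1 (by positivity) (mul_le_one₀ h2 (abs_nonneg _) h3)

lemma exists_abs_iteratedDeriv_bumpProfile_le (k : ℕ) :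
    ∃ K, ∀ t, |iteratedDeriv k (bumpProfile m) t| ≤ K := by
  have hsupp : HasCompactSupport (iteratedDeriv k (bumpProfile m)) := by
    rw [iteratedDeriv_eq_iterate]
    induction k with
    | zero => exact hasCompactSupport_bumpProfile m
    | succ k ih => rw [Function.iterate_succ_apply']; exact ih.deriv
  exact ((contDiff_bumpProfile m).continuous_iteratedDeriv k (by exact_mod_cast le_top))
    |>.bounded_above_of_compact_support hsupp

variable {m}

lemma bumpProfile_nonneg {t : ℝ} (ht : 0 ≤ t) : 0 ≤ bumpProfile m t := by
  rcases le_or_gt (1 / 2) |t| with ht' | ht'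
  · rw [bumpProfile_eq_zero m ht']
  have : t ≤ 1 := by rw [abs_of_nonneg ht] at ht'; linarith
  exact mul_nonneg (pow_nonneg ht m) (mul_nonneg (by nlinarith) quarterBump.nonneg)

lemma bumpProfile_nonpos (hm : Odd m) {t : ℝ} (ht : t ≤ 0) : bumpProfile m t ≤ 0 := by
  rcases le_or_gt (1 / 2) |t| with ht' | ht'
  · rw [bumpProfile_eq_zero m ht']
  have : -1 ≤ t := by rw [abs_of_nonpos ht] at ht'; linarith
  exact mul_nonpos_of_nonpos_of_nonneg (hm.pow_nonpos ht)
    (mul_nonneg (by nlinarith) quarterBump.nonneg)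

end Profile

section Scaled

noncomputable def scaledProfile (m : ℕ) (δ x : ℝ) : ℝ := δ ^ (m + 2) * bumpProfile m (δ⁻¹ * x)

noncomputable def profileJet (m : ℕ) (δ : ℝ) : ℝ[X] := C (δ ^ 2) * X ^ m - X ^ (m + 2)

variable {m : ℕ} {δ : ℝ}

lemma contDiff_scaledProfile (m : ℕ) (δ : ℝ) : ContDiff ℝ ∞ (scaledProfile m δ) :=
  contDiff_const.mul ((contDiff_bumpProfile m).comp (contDiff_const.mul contDiff_id))

lemma delta0Zero_scaledProfile (hm : Odd m) (hδ : 0 < δ) : Delta0Zero (scaledProfile m δ) :=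
  ⟨fun x hx => mul_nonpos_of_nonneg_of_nonpos (by positivity)
      (bumpProfile_nonpos hm (mul_nonpos_of_nonneg_of_nonpos (by positivity) hx.2)),
    fun x hx => mul_nonneg (by positivity)
      (bumpProfile_nonneg (mul_nonneg (inv_nonneg.2 hδ.le) hx.1))⟩

lemma abs_scaledProfile_le_one (hδ0 : 0 ≤ δ) (hδ1 : δ ≤ 1) (x : ℝ) : |scaledProfile m δ x| ≤ 1 := by
  rw [scaledProfile, abs_mul, abs_of_nonneg (by positivity)]
  exact mul_le_one₀ (pow_le_one₀ hδ0 hδ1) (abs_nonneg _) (abs_bumpProfile_le_one m _)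

lemma eval_profileJet (x : ℝ) : (profileJet m δ).eval x = x ^ m * (δ ^ 2 - x ^ 2) := by
  simp only [profileJet, eval_sub, eval_mul, eval_C, eval_pow, eval_X]
  ring

lemma natDegree_profileJet_le : (profileJet m δ).natDegree ≤ m + 2 :=
  (natDegree_sub_le_of_le ((natDegree_C_mul_le _ _).trans (natDegree_X_pow_le m))
    (natDegree_X_pow_le _)).trans (by omega)

lemma abs_eval_profileJet_le (hδ : |δ| ≤ 1) {x : ℝ} (hx : |x| ≤ 1) :
    |(profileJet m δ).eval x| ≤ 2 := by
  have hxm : |x ^ m| ≤ 1 := by rw [abs_pow]; exact pow_le_one₀ (abs_nonneg x) hx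
  have h2 : |δ ^ 2 - x ^ 2| ≤ 2 := by
    rw [abs_le] at hδ hx ⊢
    constructor <;> nlinarith
  rw [eval_profileJet, abs_mul]
  nlinarith [abs_nonneg (x ^ m), abs_nonneg (δ ^ 2 - x ^ 2)]

lemma scaledProfile_eventuallyEq_profileJet (hδ : 0 < δ) :
    scaledProfile m δ =ᶠ[𝓝 0] fun x => (profileJet m δ).eval x := by
  filter_upwards [Metric.ball_mem_nhds (0 : ℝ) (by positivity : 0 < δ / 4)] with x hx
  rw [Metric.mem_ball, Real.dist_eq, sub_zero] at hx
  have ht : |δ⁻¹ * x| ≤ 1 / 4 := by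
    rw [abs_mul, abs_inv, abs_of_pos hδ, inv_mul_le_iff₀ hδ]
    linarith
  have hx' : δ * (δ⁻¹ * x) = x := mul_inv_cancel_left₀ hδ.ne' x
  calc δ ^ (m + 2) * bumpProfile m (δ⁻¹ * x)
      = (δ * (δ⁻¹ * x)) ^ m * (δ ^ 2 - (δ * (δ⁻¹ * x)) ^ 2) := by
        rw [bumpProfile_of_abs_le m ht]; ring
    _ = (profileJet m δ).eval x := by rw [hx', eval_profileJet]

lemma iteratedDeriv_scaledProfile_zero (hδ : 0 < δ) (i : ℕ) :
    iteratedDeriv i (scaledProfile m δ) 0 = (derivative^[i] (profileJet m δ)).eval 0 := by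
  rw [(scaledProfile_eventuallyEq_profileJet hδ).iteratedDeriv_eq, iteratedDeriv_eval]

lemma iteratedDeriv_scaledProfile (hδ : δ ≠ 0) (x : ℝ) :
    iteratedDeriv (m + 3) (scaledProfile m δ) x
      = δ⁻¹ * iteratedDeriv (m + 3) (bumpProfile m) (δ⁻¹ * x) := by
  change iteratedDeriv (m + 3) (fun x => δ ^ (m + 2) * bumpProfile m (δ⁻¹ * x)) x = _
  rw [iteratedDeriv_const_mul_field,
    iteratedDeriv_comp_const_mul (contDiff_infty.1 (contDiff_bumpProfile m) _), ← mul_assoc]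
  congr 1
  rw [show m + 3 = m + 2 + 1 from rfl, pow_succ δ⁻¹, ← mul_assoc, ← mul_pow, mul_inv_cancel₀ hδ,
    one_pow, one_mul]

end Scaled

section Obstruction

variable {m : ℕ} {δ : ℝ}

lemma nonneg_of_delta0Zero_eq_pow_mul {h : ℝ → ℝ} (hh : Delta0Zero h) (hm : Odd m) {x g : ℝ}
    (hx : x ∈ Icc (-1 : ℝ) 1) (hx0 : x ≠ 0) (hxg : h x = x ^ m * g) : 0 ≤ g := by
  rcases hx0.lt_or_gt with hneg | hpos
  · exact nonneg_of_mul_nonpos_right (hxg ▸ hh.1 x ⟨hx.1, hneg.le⟩) (hm.pow_neg hneg)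
  · exact (mul_nonneg_iff_of_pos_left (pow_pos hpos m)).1 (hxg ▸ hh.2 x ⟨hpos.le, hx.2⟩)

lemma three_le_mul_eval_sub_eval_neg (hm : Odd m) (hδ0 : 0 < δ) (hδ1 : 2 * δ ≤ 1) {q : ℝ[X]}
    (hP : Delta0Zero fun x => (profileJet m δ + X ^ (m + 3) * q).eval x) :
    3 ≤ 4 * δ * (q.eval (2 * δ) - q.eval (-(2 * δ))) := by
  have heval : ∀ x : ℝ, (profileJet m δ + X ^ (m + 3) * q).eval x
      = x ^ m * (δ ^ 2 - x ^ 2 + x ^ 3 * q.eval x) := fun x => by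
    rw [eval_add, eval_profileJet, eval_mul, eval_pow, eval_X]
    ring
  have hpos := nonneg_of_delta0Zero_eq_pow_mul hP hm ⟨by linarith, hδ1⟩ (by positivity)
    (heval (2 * δ))
  have hneg := nonneg_of_delta0Zero_eq_pow_mul hP hm ⟨by linarith, by linarith⟩
    (by linarith : -(2 * δ) ≠ 0) (heval (-(2 * δ)))
  have hδ2 : 0 < 2 * δ ^ 2 := by positivity
  -- the sum of the two brackets is `8δ³ (q(2δ) - q(-2δ)) - 6δ²`
  nlinarith

lemma three_le_mul_supNorm_sub_profileJet {d : ℕ} (hm : Odd m) {C : ℝ}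
    (hC : ∀ p : ℝ[X], p.natDegree ≤ d → ∀ k, |p.coeff k| ≤ C * supNorm (fun x => p.eval x) (-1) 1)
    (hδ0 : 0 < δ) (hδ1 : 2 * δ ≤ 1) {P : ℝ[X]} (hPΔ : Delta0Zero fun x => P.eval x)
    (hdeg : (P - profileJet m δ).natDegree ≤ d) (hdvd : X ^ (m + 3) ∣ P - profileJet m δ) :
    3 ≤ 16 * (d + 1) * C * δ ^ 2 * supNorm (fun x => (P - profileJet m δ).eval x) (-1) 1 := by
  obtain ⟨q, hq⟩ := hdvd
  set N := supNorm (fun x => (P - profileJet m δ).eval x) (-1) 1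
  have hqdeg : q.natDegree ≤ d := by
    rcases eq_or_ne q 0 with rfl | hq0
    · simp
    · rw [hq, natDegree_X_pow_mul _ hq0] at hdeg
      omega
  have hcoeff : ∀ i, |q.coeff i| ≤ C * N := fun i => by
    have : (P - profileJet m δ).coeff (i + (m + 3)) = q.coeff i := by rw [hq, coeff_X_pow_mul]
    exact this ▸ hC _ hdeg _
  have hP : P = profileJet m δ + X ^ (m + 3) * q := by rw [← hq]; ring
  calc (3 : ℝ) ≤ 4 * δ * (q.eval (2 * δ) - q.eval (-(2 * δ))) :=
        three_le_mul_eval_sub_eval_neg hm hδ0 hδ1 (hP ▸ hPΔ)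
    _ ≤ 4 * δ * ((d + 1) * (C * N) * (2 * (2 * δ))) :=
        mul_le_mul_of_nonneg_left (eval_sub_eval_neg_le hqdeg hcoeff (by positivity) hδ1)
          (by positivity)
    _ = 16 * (d + 1) * C * δ ^ 2 * N := by ring

lemma supNorm_sub_profileJet_le (hδ0 : 0 < δ) (hδ1 : δ ≤ 1) (P : ℝ[X]) :
    supNorm (fun x => (P - profileJet m δ).eval x) (-1) 1
      ≤ supNorm (fun x => scaledProfile m δ x - P.eval x) (-1) 1 + 3 := by
  refine supNorm_le (by norm_num) fun x hx => ?_
  have hx1 : |x| ≤ 1 := abs_le.2 hx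
  have hfP := abs_le_supNorm (g := fun x => scaledProfile m δ x - P.eval x)
    ((contDiff_scaledProfile m δ).continuous.sub P.continuous).continuousOn hx
  have hf := abs_scaledProfile_le_one (m := m) hδ0.le hδ1 x
  have hT := abs_eval_profileJet_le (m := m) (by rwa [abs_of_pos hδ0]) hx1
  rw [eval_sub]
  calc |P.eval x - (profileJet m δ).eval x|
      = |-(scaledProfile m δ x - P.eval x) + scaledProfile m δ x - (profileJet m δ).eval x| := by
        ring_nf
    _ ≤ |scaledProfile m δ x - P.eval x| + |scaledProfile m δ x| + |(profileJet m δ).eval x| :=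
        (abs_sub _ _).trans (add_le_add_left ((abs_add_le _ _).trans_eq (by rw [abs_neg])) _)
    _ ≤ _ := by linarith

lemma supNorm_iteratedDerivWithin_scaledProfile_le {K : ℝ}
    (hK : ∀ t, |iteratedDeriv (m + 3) (bumpProfile m) t| ≤ K) (hδ : 0 < δ) :
    supNorm (iteratedDerivWithin (m + 3) (scaledProfile m δ) (Icc (-1) 1)) (-1) 1 ≤ δ⁻¹ * K := by
  refine supNorm_le (by norm_num) fun x hx => ?_
  rw [iteratedDerivWithin_eq_iteratedDeriv (uniqueDiffOn_Icc (by norm_num))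
      (contDiff_infty.1 (contDiff_scaledProfile m δ) _).contDiffAt hx,
    iteratedDeriv_scaledProfile hδ.ne', abs_mul, abs_of_pos (inv_pos.2 hδ)]
  exact mul_le_mul_of_nonneg_left (hK _) (by positivity)

lemma X_pow_dvd_sub_profileJet (hδ : 0 < δ) {P : ℝ[X]}
    (hP : ∀ i < m + 3, (derivative^[i] P).eval 0
      = iteratedDerivWithin i (scaledProfile m δ) (Icc (-1) 1) 0) :
    X ^ (m + 3) ∣ P - profileJet m δ :=
  X_pow_dvd_sub_of_iterate_derivative_eval_zero fun i hi => by
    rw [hP i hi, iteratedDerivWithin_eq_iteratedDeriv (uniqueDiffOn_Icc (by norm_num))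
      (contDiff_infty.1 (contDiff_scaledProfile m δ) _).contDiffAt (by norm_num),
      iteratedDeriv_scaledProfile_zero hδ]

lemma three_le_mul_supNorm_scaledProfile_sub {d : ℕ} (hm : Odd m) {C : ℝ} (hC0 : 0 ≤ C)
    (hC : ∀ p : ℝ[X], p.natDegree ≤ d → ∀ k, |p.coeff k| ≤ C * supNorm (fun x => p.eval x) (-1) 1)
    (hd : m + 2 ≤ d) (hδ0 : 0 < δ) (hδ1 : δ ≤ 1 / 2) {P : ℝ[X]} (hPdeg : P.natDegree ≤ d)
    (hPΔ : Delta0Zero fun x => P.eval x)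
    (hP : ∀ i < m + 3, (derivative^[i] P).eval 0
      = iteratedDerivWithin i (scaledProfile m δ) (Icc (-1) 1) 0) :
    3 ≤ 16 * (d + 1) * C * δ ^ 2 *
      (supNorm (fun x => scaledProfile m δ x - P.eval x) (-1) 1 + 3) := by
  have hdeg : (P - profileJet m δ).natDegree ≤ d :=
    (natDegree_sub_le_of_le hPdeg natDegree_profileJet_le).trans (max_le le_rfl hd)
  exact (three_le_mul_supNorm_sub_profileJet hm hC hδ0 (by linarith) hPΔ hdeg
    (X_pow_dvd_sub_profileJet hδ0 hP)).trans
      (mul_le_mul_of_nonneg_left (supNorm_sub_profileJet_le hδ0 (by linarith) P) (by positivity))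

end Obstruction

theorem statement18_general (r : ℕ) (hr : 4 ≤ r) (hre : Even r) (n : ℕ) (A : ℝ) :
    ∃ f : ℝ → ℝ, ContDiffOn ℝ r f (Set.Icc (-1 : ℝ) 1) ∧ Delta0Zero f ∧
      ∀ P : Polynomial ℝ, P.natDegree ≤ n →
        Delta0Zero (fun x => P.eval x) →
        (∀ i : ℕ, i ≤ r - 1 → (Polynomial.derivative^[i] P).eval 0
            = iteratedDerivWithin i f (Set.Icc (-1 : ℝ) 1) 0) →
        A * supNorm (iteratedDerivWithin r f (Set.Icc (-1 : ℝ) 1)) (-1) 1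
          < supNorm (fun x => f x - P.eval x) (-1) 1 := by
  obtain ⟨m, rfl⟩ : ∃ m, r = m + 3 := ⟨r - 3, by omega⟩
  have hm : Odd m := by simpa [Nat.even_add_one, parity_simps] using hre
  set d := max n (m + 2)
  obtain ⟨C, hC0, hC⟩ := exists_abs_coeff_le_mul_supNorm (by norm_num : (-1 : ℝ) < 1) d
  obtain ⟨K, hK⟩ := exists_abs_iteratedDeriv_bumpProfile_le m (m + 3)
  set E := 16 * ((d : ℝ) + 1) * C
  -- small enough that `A ‖f^(r)‖ ≤ |A| K / δ` stays below the lower bound `3 / (E δ²) - 3`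
  obtain ⟨δ, hsmall, hδ0, hδ1⟩ : ∃ δ : ℝ, E * δ * (|A| * K + 3 * δ) < 3 ∧ 0 < δ ∧ δ < 1 / 2 := by
    have hlim : Tendsto (fun δ : ℝ => E * δ * (|A| * K + 3 * δ)) (𝓝[>] 0) (𝓝 0) :=
      tendsto_nhdsWithin_of_tendsto_nhds <|
        (by fun_prop : Continuous fun δ : ℝ => E * δ * (|A| * K + 3 * δ)).tendsto' 0 0 (by simp)
    exact ((hlim.eventually (gt_mem_nhds (by norm_num))).and
      (Ioo_mem_nhdsGT (by norm_num : (0 : ℝ) < 1 / 2))).exists.imp fun δ h => ⟨h.1, h.2⟩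
  refine ⟨scaledProfile m δ, (contDiff_infty.1 (contDiff_scaledProfile m δ) _).contDiffOn,
    delta0Zero_scaledProfile hm hδ0, fun P hPdeg hPΔ hPint => ?_⟩
  have hR := three_le_mul_supNorm_scaledProfile_sub hm hC0.le hC (le_max_right _ _) hδ0 hδ1.le
    (hPdeg.trans (le_max_left _ _)) hPΔ fun i hi => hPint i (by omega)
  have hD := supNorm_iteratedDerivWithin_scaledProfile_le hK hδ0
  have hAD : A * supNorm (iteratedDerivWithin (m + 3) (scaledProfile m δ) (Icc (-1) 1)) (-1) 1
      ≤ |A| * (δ⁻¹ * K) :=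
    (mul_le_mul_of_nonneg_right (le_abs_self A) supNorm_nonneg).trans
      (mul_le_mul_of_nonneg_left hD (abs_nonneg A))
  have hEδ : 0 < E * δ ^ 2 := by positivity
  refine lt_of_mul_lt_mul_left ?_ hEδ.le
  calc E * δ ^ 2 * (A * _) ≤ E * δ ^ 2 * (|A| * (δ⁻¹ * K)) := mul_le_mul_of_nonneg_left hAD hEδ.le
    _ = E * δ * (|A| * K) := by field_simp
    _ < 3 - 3 * (E * δ ^ 2) := by linarith
    _ ≤ E * δ ^ 2 * supNorm (fun x => scaledProfile m δ x - P.eval x) (-1) 1 := by linarith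

/-- Copositive approximation with interpolation at `Y_s = {0}`, negative result for
`f ∈ C^r` with even `r ≥ 4`: for any `n ≥ r - 1` and `A > 0`, there is
`f ∈ C^r[-1,1] ∩ Δ^(0)({0})` such that any polynomial of degree ≤ n in `Δ^(0)({0})`
with `P_n^{(i)}(0) = f^{(i)}(0)` for `0 ≤ i ≤ r - 1` satisfies
`‖f - P_n‖ > A ‖f^{(r)}‖`. -/
theorem statement18 (r : ℕ) (hr : 4 ≤ r) (hre : Even r) (n : ℕ) (hn : r - 1 ≤ n)
    (A : ℝ) (hA : 0 < A) :
    ∃ f : ℝ → ℝ, ContDiffOn ℝ r f (Set.Icc (-1 : ℝ) 1) ∧ Delta0Zero f ∧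
      ∀ P : Polynomial ℝ, P.natDegree ≤ n →
        Delta0Zero (fun x => P.eval x) →
        (∀ i : ℕ, i ≤ r - 1 → (Polynomial.derivative^[i] P).eval 0
            = iteratedDerivWithin i f (Set.Icc (-1 : ℝ) 1) 0) →
        A * supNorm (iteratedDerivWithin r f (Set.Icc (-1 : ℝ) 1)) (-1) 1
          < supNorm (fun x => f x - P.eval x) (-1) 1 :=
  statement18_general r hr hre n A
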